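/- The group presented by two generators a, b subject to the two relations aba = bab and (ab)⁶ = 1 is isomorphic to SL(2,ℤ), via the isomorphism induced by a ↦ u₁₂ and b ↦ u₂₁. (In other words, imposing the braid relation and (ab)⁶ = 1 on the two generators u₁₂, u₂₁ gives an abstract presentation of the modular group SL(2,ℤ).) -/

import Mathlib

/-- The relations `aba = bab` and `(ab)⁶ = 1` on two generators (indexed by
`Bool`, with `true ↦ a` and `false ↦ b`). -/
def modRels : Set (FreeGroup Bool) :=
  {FreeGroup.of true * FreeGroup.of false * FreeGroup.of true *
    (FreeGroup.of false * FreeGroup.of true * FreeGroup.of false)⁻¹,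
   (FreeGroup.of true * FreeGroup.of false) ^ 6}

/-- The matrix `u₁₂ = [[1,1],[0,1]]` in `SL(2,ℤ)`. -/
def u12 : Matrix.SpecialLinearGroup (Fin 2) ℤ :=
  ⟨!![1, 1; 0, 1], by norm_num [Matrix.det_fin_two_of]⟩

/-- The matrix `u₂₁ = [[1,0],[-1,1]]` in `SL(2,ℤ)`. -/
def u21 : Matrix.SpecialLinearGroup (Fin 2) ℤ :=
  ⟨!![1, 0; -1, 1], by norm_num [Matrix.det_fin_two_of]⟩

/-!
In the presented group put `s = aba` and `u = ab`. The braid relation says that conjugation by `s`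
swaps `a` and `b`, so `s² = u³` is central, and `u⁶ = 1` makes it an involution. Modulo `u³` the
group is generated by the involution `s` and the element `u` of order 3, which act on the upper
half-plane by `τ ↦ -1/τ` and `τ ↦ 1/(1 - τ)`. Now `s` maps `Re τ > 0` into `Re τ < 0`, while `u`
and `u²` map `Re τ < 0` back into `Re τ > 0`, so the ping-pong lemma makes this action faithful
on the quotient. Since `u³ ↦ -1 ≠ 1`, the map to `SL(2, ℤ)` is injective; it is surjective
because `s⁻¹ ↦ S` and `a ↦ T`, which generate `SL(2, ℤ)`.
-/

open Subgroup Monoid Pointwise Matrix MatrixGroups ModularGroup UpperHalfPlane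

section PingPong

variable {Γ α : Type*} [Group Γ]

theorem exists_pow_eq_of_mem_zpowers {x g : Γ} {n : ℕ} (hn : 0 < n) (hx : x ^ n = 1)
    (hg : g ∈ zpowers x) : ∃ k < n, x ^ k = g := by
  obtain ⟨m, rfl⟩ := hg
  have hm : 0 ≤ m % n := Int.emod_nonneg _ (by omega)
  have hmn : m % n < n := Int.emod_lt_of_pos _ (by omega)
  refine ⟨(m % n).toNat, by omega, ?_⟩
  rw [← zpow_natCast, Int.toNat_of_nonneg hm, ← zpow_eq_zpow_emod' m hx]

theorem Subgroup.zpowers_normal_of_mem_center {z : Γ} (hz : z ∈ center Γ) :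
    (zpowers z).Normal :=
  ⟨fun n hn g => by rwa [mem_center_iff.mp (zpowers_le.mpr hz hn) g, mul_inv_cancel_right]⟩

theorem MonoidHom.injective_of_pingPong (f : Γ →* Equiv.Perm α) {H K : Subgroup Γ}
    (hHK : H ⊔ K = ⊤) (hK : 3 ≤ Cardinal.mk K) {A B : Set α} (hA : A.Nonempty)
    (hB : B.Nonempty) (hAB : Disjoint A B) (hHB : ∀ h ∈ H, h ≠ 1 → f h • B ⊆ A)
    (hKA : ∀ k ∈ K, k ≠ 1 → f k • A ⊆ B) : Function.Injective f := by
  let S : Bool → Subgroup Γ := fun i => cond i H K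
  let ι : CoprodI (fun i => S i) →* Γ := CoprodI.lift fun i => (S i).subtype
  have hι : ι.range = ⊤ := by
    rw [CoprodI.range_eq_iSup, iSup_bool_eq]
    simpa [S] using hHK
  have hfι : Function.Injective (f.comp ι) := by
    have : f.comp ι = CoprodI.lift fun i => f.comp (S i).subtype :=
      CoprodI.ext_hom _ _ fun i => by ext; simp [ι]
    rw [this]
    refine CoprodI.lift_injective_of_ping_pong _ (Or.inr ⟨false, hK⟩) (fun i => cond i A B)
      (by rintro (_ | _) <;> assumption) ?_ ?_
    · rintro (_ | _) (_ | _) hij <;> simp_all [Function.onFun, disjoint_comm]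
    · rintro (_ | _) (_ | _) hij ⟨g, hg⟩ hne
      exacts [absurd rfl hij, hKA g hg (by simpa using hne), hHB g hg (by simpa using hne),
        absurd rfl hij]
  rw [injective_iff_map_eq_one]
  intro g hg
  obtain ⟨q, rfl⟩ : g ∈ ι.range := hι ▸ mem_top g
  rw [hfι (a₁ := q) (a₂ := 1) (by simpa using hg), map_one]

theorem MonoidHom.injective_of_pingPong_two_three (f : Γ →* Equiv.Perm α) {x y : Γ}
    (hxy : closure {x, y} = ⊤) (hx : x ^ 2 = 1) (hy : y ^ 3 = 1) {A B : Set α}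
    (hB : B.Nonempty) (hAB : Disjoint A B) (hxB : f x • B ⊆ A)
    (hyA : f y • A ⊆ B) (hy2A : f (y ^ 2) • A ⊆ B) : Function.Injective f := by
  have hA : A.Nonempty := (hB.smul_set (a := f x)).mono hxB
  have hy1 : y ≠ 1 := by
    rintro rfl
    exact hA.ne_empty (hAB.eq_bot_of_le (by simpa using hyA))
  have hcard : Nat.card (zpowers y) = 3 := by
    rw [Nat.card_zpowers, orderOf_eq_prime hy hy1]
  have : Finite (zpowers y) := Nat.finite_of_card_ne_zero (by rw [hcard]; norm_num)
  refine f.injective_of_pingPong (H := zpowers x) (K := zpowers y) ?_ ?_ hA hB hAB ?_ ?_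
  · rw [zpowers_eq_closure, zpowers_eq_closure, ← Subgroup.closure_union, ← Set.insert_eq, hxy]
  · rw [← Nat.cast_card, hcard]; rfl
  · intro h hh hne
    obtain ⟨k, hk, rfl⟩ := exists_pow_eq_of_mem_zpowers two_pos hx hh
    interval_cases k
    · exact absurd (pow_zero x) hne
    · simpa using hxB
  · intro h hh hne
    obtain ⟨k, hk, rfl⟩ := exists_pow_eq_of_mem_zpowers three_pos hy hh
    interval_cases k
    · exact absurd (pow_zero y) hne
    · simpa using hyA
    · exact hy2A

end PingPong

theorem MonoidHom.injective_of_lift_injective {G M P : Type*} [Group G] [Group M] [Group P]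
    (φ : G →* M) (ψ : M →* P) (N : Subgroup G) [N.Normal] (hN : N ≤ (ψ.comp φ).ker)
    (hlift : Function.Injective (QuotientGroup.lift N (ψ.comp φ) hN))
    (hφN : ∀ g ∈ N, φ g = 1 → g = 1) : Function.Injective φ := by
  rw [injective_iff_map_eq_one]
  intro g hg
  refine hφN g ((QuotientGroup.eq_one_iff g).mp (hlift ?_)) hg
  simp [hg]

lemma coe_u12 : (u12 : Matrix (Fin 2) (Fin 2) ℤ) = !![1, 1; 0, 1] := rfl

lemma coe_u21 : (u21 : Matrix (Fin 2) (Fin 2) ℤ) = !![1, 0; -1, 1] := rfl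

lemma coe_u12_mul_u21_mul_u12 :
    ((u12 * u21 * u12 : SL(2, ℤ)) : Matrix (Fin 2) (Fin 2) ℤ) = !![0, 1; -1, 0] := by
  simp [coe_u12, coe_u21]

lemma coe_u12_mul_u21 : ((u12 * u21 : SL(2, ℤ)) : Matrix (Fin 2) (Fin 2) ℤ) = !![0, 1; -1, 1] := by
  simp [coe_u12, coe_u21]

lemma coe_u12_mul_u21_sq :
    (((u12 * u21) ^ 2 : SL(2, ℤ)) : Matrix (Fin 2) (Fin 2) ℤ) = !![-1, 1; -1, 0] := by
  simp [sq, coe_u12, coe_u21]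

lemma u12_mul_u21_mul_u12_eq_u21_mul_u12_mul_u21 : u12 * u21 * u12 = u21 * u12 * u21 := by
  ext : 1
  simp [coe_u12, coe_u21]

lemma u12_mul_u21_pow_three : (u12 * u21) ^ 3 = -1 := by
  ext i j
  fin_cases i <;> fin_cases j <;> simp [pow_succ, coe_u12, coe_u21]

lemma u12_mul_u21_pow_six : (u12 * u21) ^ 6 = 1 := by
  rw [show 6 = 3 * 2 from rfl, pow_mul, u12_mul_u21_pow_three, neg_one_sq]

lemma S_eq_inv_u12_mul_u21_mul_u12 : S = (u12 * u21 * u12)⁻¹ := by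
  rw [eq_inv_iff_mul_eq_one]
  ext i j
  fin_cases i <;> fin_cases j <;> simp [coe_u12, coe_u21, coe_S, mul_apply]

lemma T_eq_u12 : T = u12 := by
  ext : 1
  simp [coe_u12, coe_T]

lemma UpperHalfPlane.coe_smul_of_coe_eq {g : SL(2, ℤ)} {a b c d : ℤ}
    (hg : (g : Matrix (Fin 2) (Fin 2) ℤ) = !![a, b; c, d]) (τ : ℍ) :
    ((g • τ : ℍ) : ℂ) = (a * τ + b) / (c * τ + d) := by
  rw [coe_specialLinearGroup_apply, hg]
  simp

lemma coe_u12_mul_u21_mul_u12_smul (τ : ℍ) : (((u12 * u21 * u12) • τ : ℍ) : ℂ) = -(τ : ℂ)⁻¹ := by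
  rw [coe_smul_of_coe_eq coe_u12_mul_u21_mul_u12]
  simp

lemma coe_u12_mul_u21_smul (τ : ℍ) : (((u12 * u21) • τ : ℍ) : ℂ) = (1 - (τ : ℂ))⁻¹ := by
  rw [coe_smul_of_coe_eq coe_u12_mul_u21]
  push_cast
  ring

lemma coe_u12_mul_u21_sq_smul (τ : ℍ) : (((u12 * u21) ^ 2 • τ : ℍ) : ℂ) = 1 - (τ : ℂ)⁻¹ := by
  rw [coe_smul_of_coe_eq coe_u12_mul_u21_sq]
  push_cast
  rw [add_zero, neg_one_mul, div_neg, neg_add_eq_sub, sub_div, div_self τ.ne_zero, one_div,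
    neg_sub]

lemma Complex.re_inv_pos_iff {w : ℂ} : 0 < w⁻¹.re ↔ 0 < w.re := by
  rw [Complex.inv_re]
  rcases eq_or_ne w 0 with rfl | hw
  · simp
  · exact div_pos_iff_of_pos_right (Complex.normSq_pos.mpr hw)

lemma u12_mul_u21_mul_u12_smul_subset :
    (u12 * u21 * u12) • {τ : ℍ | 0 < τ.re} ⊆ {τ | τ.re < 0} := by
  rintro _ ⟨τ, hτ : 0 < τ.re, rfl⟩
  rw [Set.mem_ofPred_eq, ← coe_re, coe_u12_mul_u21_mul_u12_smul, Complex.neg_re, neg_neg_iff_pos,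
    Complex.re_inv_pos_iff]
  exact hτ

lemma u12_mul_u21_smul_subset : (u12 * u21) • {τ : ℍ | τ.re < 0} ⊆ {τ | 0 < τ.re} := by
  rintro _ ⟨τ, hτ : τ.re < 0, rfl⟩
  rw [Set.mem_ofPred_eq, ← coe_re, coe_u12_mul_u21_smul, Complex.re_inv_pos_iff, Complex.sub_re,
    Complex.one_re, coe_re]
  linarith

lemma u12_mul_u21_sq_smul_subset : (u12 * u21) ^ 2 • {τ : ℍ | τ.re < 0} ⊆ {τ | 0 < τ.re} := by
  rintro _ ⟨τ, hτ : τ.re < 0, rfl⟩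
  have : ¬ 0 < (τ : ℂ)⁻¹.re := by rw [Complex.re_inv_pos_iff, coe_re]; linarith
  rw [Set.mem_ofPred_eq, ← coe_re, coe_u12_mul_u21_sq_smul, Complex.sub_re, Complex.one_re]
  linarith

namespace modRels

open PresentedGroup

lemma of_mul_of_mul_of :
    (of true * of false * of true : PresentedGroup modRels) = of false * of true * of false := by
  have h := one_of_mem (rels := modRels) (Set.mem_insert _ _)
  rwa [map_mul, map_inv, mul_inv_eq_one] at h

lemma of_mul_of_pow_six : (of true * of false : PresentedGroup modRels) ^ 6 = 1 :=
  one_of_mem (Set.mem_insert_of_mem _ rfl)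

def s : PresentedGroup modRels := of true * of false * of true

def u : PresentedGroup modRels := of true * of false

lemma s_sq : s ^ 2 = u ^ 3 :=
  calc s ^ 2 = of true * of false * of true * (of false * of true * of false) := by
        rw [sq, s, of_mul_of_mul_of]
    _ = u ^ 3 := by simp only [u, pow_succ, pow_zero, one_mul, mul_assoc]

lemma s_mul_of_true : s * of true = of false * s :=
  calc s * of true = of false * of true * of false * of true := by rw [s, of_mul_of_mul_of]
    _ = of false * s := by simp only [s, mul_assoc]

lemma s_mul_of_false : s * of false = of true * s :=
  calc s * of false = of true * (of false * of true * of false) := by simp only [s, mul_assoc]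
    _ = of true * s := by rw [← of_mul_of_mul_of, s]

lemma u_pow_three_mem_center : u ^ 3 ∈ center (PresentedGroup modRels) := by
  rw [← s_sq, center_eq_iInf (closure_range_of modRels)]
  simp only [mem_iInf, Set.mem_range, mem_centralizer_singleton_iff]
  rintro _ ⟨(_ | _), rfl⟩
  · rw [sq, mul_assoc, s_mul_of_false, ← mul_assoc, s_mul_of_true, mul_assoc]
  · rw [sq, mul_assoc, s_mul_of_true, ← mul_assoc, s_mul_of_false, mul_assoc]

lemma closure_s_u : Subgroup.closure {s, u} = ⊤ := by
  rw [eq_top_iff, ← closure_range_of, closure_le]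
  have hs : s ∈ Subgroup.closure {s, u} := subset_closure (by simp)
  have hu : u ∈ Subgroup.closure {s, u} := subset_closure (by simp)
  rintro _ ⟨(_ | _), rfl⟩
  · have hb : of false = s⁻¹ * u ^ 2 := by simp only [s, u, sq]; group
    rw [SetLike.mem_coe, hb]
    exact mul_mem (inv_mem hs) (pow_mem hu 2)
  · have ha : of true = u⁻¹ * s := by simp only [s, u]; group
    rw [SetLike.mem_coe, ha]
    exact mul_mem (inv_mem hu) hs

def toSL2Z : PresentedGroup modRels →* SL(2, ℤ) :=
  toGroup (f := fun i => cond i u12 u21) <| by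
    rintro r (rfl | rfl)
    · simp [u12_mul_u21_mul_u12_eq_u21_mul_u12_mul_u21]
    · simp [u12_mul_u21_pow_six]

lemma toSL2Z_of (i : Bool) : toSL2Z (of i) = cond i u12 u21 := toGroup.of _

lemma toSL2Z_s : toSL2Z s = u12 * u21 * u12 := by simp [s, toSL2Z_of]

lemma toSL2Z_u : toSL2Z u = u12 * u21 := by simp [u, toSL2Z_of]

lemma toSL2Z_surjective : Function.Surjective toSL2Z := by
  rw [← MonoidHom.range_eq_top, eq_top_iff, ← SpecialLinearGroup.SL2Z_generators, closure_le]
  rintro _ (rfl | rfl)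
  · exact ⟨s⁻¹, by rw [map_inv, toSL2Z_s, S_eq_inv_u12_mul_u21_mul_u12]⟩
  · exact ⟨of true, by rw [toSL2Z_of, T_eq_u12]; rfl⟩

instance : (zpowers (u ^ 3)).Normal := zpowers_normal_of_mem_center u_pow_three_mem_center

lemma toSL2Z_u_pow_three : toSL2Z (u ^ 3) = -1 := by
  rw [map_pow, toSL2Z_u, u12_mul_u21_pow_three]

lemma zpowers_u_pow_three_le_ker :
    zpowers (u ^ 3) ≤ ((MulAction.toPermHom _ ℍ).comp toSL2Z).ker := by
  rw [zpowers_le, MonoidHom.mem_ker]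
  ext τ
  simp [toSL2Z_u_pow_three]

noncomputable def toPermQuotient : PresentedGroup modRels ⧸ zpowers (u ^ 3) →* Equiv.Perm ℍ :=
  QuotientGroup.lift _ _ zpowers_u_pow_three_le_ker

lemma toPermQuotient_injective : Function.Injective toPermQuotient := by
  refine toPermQuotient.injective_of_pingPong_two_three (x := (s : PresentedGroup modRels ⧸ _))
    (y := (u : PresentedGroup modRels ⧸ _)) ?_ ?_ ?_ (A := {τ : ℍ | τ.re < 0})
    (B := {τ | 0 < τ.re})
    ⟨⟨1 + Complex.I, by simp⟩, show 0 < (1 + Complex.I).re by simp⟩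
    (Set.disjoint_left.mpr fun τ (h1 : τ.re < 0) (h2 : 0 < τ.re) => h1.not_gt h2) ?_ ?_ ?_
  · have := congrArg (Subgroup.map (QuotientGroup.mk' (zpowers (u ^ 3)))) closure_s_u
    rwa [MonoidHom.map_closure, Set.image_pair, ← MonoidHom.range_eq_map,
      QuotientGroup.range_mk'] at this
  · rw [← QuotientGroup.mk_pow, s_sq]
    exact (QuotientGroup.eq_one_iff _).mpr (mem_zpowers _)
  · rw [← QuotientGroup.mk_pow]
    exact (QuotientGroup.eq_one_iff _).mpr (mem_zpowers _)
  · rw [toPermQuotient, QuotientGroup.lift_mk, MonoidHom.comp_apply, toSL2Z_s]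
    exact u12_mul_u21_mul_u12_smul_subset
  · rw [toPermQuotient, QuotientGroup.lift_mk, MonoidHom.comp_apply, toSL2Z_u]
    exact u12_mul_u21_smul_subset
  · rw [← QuotientGroup.mk_pow, toPermQuotient, QuotientGroup.lift_mk, MonoidHom.comp_apply,
      map_pow, toSL2Z_u]
    exact u12_mul_u21_sq_smul_subset

lemma toSL2Z_injective : Function.Injective toSL2Z := by
  refine toSL2Z.injective_of_lift_injective _ _ zpowers_u_pow_three_le_ker
    toPermQuotient_injective fun g hg hg1 => ?_
  have hu6 : (u ^ 3) ^ 2 = 1 := by rw [← pow_mul]; exact of_mul_of_pow_six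
  obtain ⟨k, hk, rfl⟩ := exists_pow_eq_of_mem_zpowers two_pos hu6 hg
  interval_cases k
  · rfl
  · rw [pow_one, toSL2Z_u_pow_three] at hg1
    simpa using congrArg (fun g : SL(2, ℤ) => (g : Matrix (Fin 2) (Fin 2) ℤ) 0 0) hg1

end modRels

/-- The group presented by two generators `a, b` subject to the relations
`aba = bab` and `(ab)⁶ = 1` is isomorphic to `SL(2,ℤ)` via the isomorphism
induced by `a ↦ u₁₂`, `b ↦ u₂₁`. -/
theorem presentedGroup_mulEquiv_SL2Z :
    ∃ e : PresentedGroup modRels ≃* Matrix.SpecialLinearGroup (Fin 2) ℤ,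
      e (PresentedGroup.of true) = u12 ∧ e (PresentedGroup.of false) = u21 :=
  ⟨MulEquiv.ofBijective modRels.toSL2Z ⟨modRels.toSL2Z_injective, modRels.toSL2Z_surjective⟩,
    modRels.toSL2Z_of true, modRels.toSL2Z_of false⟩
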